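/- arXiv:2601.06761 — 6 statements merged into one kernel-verified Lean document; each statement's English description precedes it below -/
import Mathlib

section
/- Suppose C, Y, A take values in {0,1} and μ(Y = y ∧ A = a) > 0 for all y, a ∈ {0,1}, and assume TPR(a) > 0 and TNR(a) > 0 for each a ∈ {0,1}. Then comparative separation holds (with respect to the i.i.d. pair on Ω × Ω) if and only if separation holds (Theorem 2: in binary classification, comparative separation is equivalent to separation). -/
open MeasureTheory

noncomputable section

/-- sign function: 1 if positive, -1 if negative, 0 if zero. -/
def sgn (t : ℝ) : ℝ := if 0 < t then 1 else if t < 0 then -1 else 0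

/-- conditional probability `P(F | E) = μ(F ∩ E) / μ(E)` (as a real number). -/
def condP {Ω : Type*} [MeasurableSpace Ω] (μ : Measure Ω) (F E : Set Ω) : ℝ :=
  (μ (F ∩ E)).toReal / (μ E).toReal

variable {Ω : Type*} [MeasurableSpace Ω]

/-- comparative ground truth on an i.i.d. pair. -/
def Yij (Y : Ω → ℝ) (p : Ω × Ω) : ℝ := sgn (Y p.1 - Y p.2)

/-- comparative prediction on an i.i.d. pair. -/
def Cij (C : Ω → ℝ) (p : Ω × Ω) : ℝ := sgn (C p.1 - C p.2)

/-- pair of sensitive attributes on an i.i.d. pair. -/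
def Aij (A : Ω → ℝ) (p : Ω × Ω) : ℝ × ℝ := (A p.1, A p.2)

/-- Separation: `C ⟂ A | Y`, stated via conditional probabilities. -/
def Separation (μ : Measure Ω) (C Y A : Ω → ℝ) : Prop :=
  ∀ c y a : ℝ, 0 < μ {ω | A ω = a ∧ Y ω = y} →
    condP μ {ω | C ω = c} {ω | A ω = a ∧ Y ω = y}
      = condP μ {ω | C ω = c} {ω | Y ω = y}

/-- Comparative separation: `C_ij ⟂ A_ij | Y_ij` on the i.i.d. pair. -/
def CompSeparation (μ : Measure Ω) (C Y A : Ω → ℝ) : Prop :=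
  ∀ c y : ℝ, (c = -1 ∨ c = 1) → (y = -1 ∨ y = 1) → ∀ a : ℝ × ℝ,
    0 < (μ.prod μ) {p | Aij A p = a ∧ Yij Y p = y} →
    condP (μ.prod μ) {p | Cij C p = c} {p | Aij A p = a ∧ Yij Y p = y}
      = condP (μ.prod μ) {p | Cij C p = c} {p | Yij Y p = y}

/-- groupwise true positive rate `TPR(a) = P(C = 1 | Y = 1 ∧ A = a)`. -/
def TPR (μ : Measure Ω) (C Y A : Ω → ℝ) (a : ℝ) : ℝ :=
  condP μ {ω | C ω = 1} {ω | Y ω = 1 ∧ A ω = a}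

/-- groupwise true negative rate `TNR(a) = P(C = 0 | Y = 0 ∧ A = a)`. -/
def TNR (μ : Measure Ω) (C Y A : Ω → ℝ) (a : ℝ) : ℝ :=
  condP μ {ω | C ω = 0} {ω | Y ω = 0 ∧ A ω = a}

/-- comparative true positive rate `TPRp(a₁,a₂) = P(C_ij = 1 | A_ij = (a₁,a₂) ∧ Y_ij = 1)`. -/
def TPRp (μ : Measure Ω) (C Y A : Ω → ℝ) (a₁ a₂ : ℝ) : ℝ :=
  condP (μ.prod μ) {p | Cij C p = 1} {p | Aij A p = (a₁, a₂) ∧ Yij Y p = 1}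

set_option linter.unusedSectionVars false

lemma condP_prod (μ : Measure Ω) [SigmaFinite μ] (s t u v : Set Ω) :
    condP (μ.prod μ) (s ×ˢ t) (u ×ˢ v) = condP μ s u * condP μ t v := by
  unfold condP
  rw [Set.prod_inter_prod, Measure.prod_prod, Measure.prod_prod,
    ENNReal.toReal_mul, ENNReal.toReal_mul, div_mul_div_comm]

lemma condP_compl (μ : Measure Ω) [IsProbabilityMeasure μ] (s E : Set Ω)
    (hs : MeasurableSet s) (hE : μ E ≠ 0) :
    condP μ sᶜ E = 1 - condP μ s E := by
  have hkey : μ (E ∩ s) + μ (E \ s) = μ E := measure_inter_add_diff E hs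
  have h1 : sᶜ ∩ E = E \ s := by ext x; simp [Set.mem_diff, and_comm]
  have h2 : s ∩ E = E ∩ s := Set.inter_comm _ _
  have hEt : (μ E).toReal ≠ 0 := by
    have := ENNReal.toReal_pos hE (measure_ne_top μ E); linarith
  unfold condP
  rw [h1, h2]
  have hadd : (μ (E ∩ s)).toReal + (μ (E \ s)).toReal = (μ E).toReal := by
    rw [← ENNReal.toReal_add (measure_ne_top μ _) (measure_ne_top μ _), hkey]
  field_simp
  linarith

lemma condP_union (μ : Measure Ω) [IsProbabilityMeasure μ] (s u v : Set Ω)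
    (hsm : MeasurableSet s) (hvm : MeasurableSet v) (hd : Disjoint u v)
    (hu : μ u ≠ 0) (hv : μ v ≠ 0)
    (h : condP μ s u = condP μ s v) :
    condP μ s (u ∪ v) = condP μ s u := by
  have hut : 0 < (μ u).toReal := ENNReal.toReal_pos hu (measure_ne_top μ u)
  have hvt : 0 < (μ v).toReal := ENNReal.toReal_pos hv (measure_ne_top μ v)
  have huv : μ (u ∪ v) = μ u + μ v := measure_union hd hvm
  have hsuv : s ∩ (u ∪ v) = (s ∩ u) ∪ (s ∩ v) := Set.inter_union_distrib_left s u v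
  have hd2 : Disjoint (s ∩ u) (s ∩ v) :=
    hd.mono Set.inter_subset_right Set.inter_subset_right
  have hm2 : μ ((s ∩ u) ∪ (s ∩ v)) = μ (s ∩ u) + μ (s ∩ v) :=
    measure_union hd2 (hsm.inter hvm)
  unfold condP at h ⊢
  rw [hsuv, hm2, huv, ENNReal.toReal_add (measure_ne_top μ _) (measure_ne_top μ _),
    ENNReal.toReal_add (measure_ne_top μ _) (measure_ne_top μ _)]
  rw [div_eq_div_iff hut.ne' hvt.ne'] at h
  rw [div_eq_div_iff (by positivity) hut.ne']
  ring_nf at h ⊢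
  linarith

lemma sgn_pair_pos (f : Ω → ℝ) (hf : ∀ ω, f ω = 0 ∨ f ω = 1) :
    {p : Ω × Ω | sgn (f p.1 - f p.2) = 1} = {ω | f ω = 1} ×ˢ {ω | f ω = 0} := by
  ext p
  rcases hf p.1 with h1 | h1 <;> rcases hf p.2 with h2 | h2 <;>
    simp [sgn, h1, h2, Set.mem_prod] <;> norm_num

lemma sgn_pair_neg (f : Ω → ℝ) (hf : ∀ ω, f ω = 0 ∨ f ω = 1) :
    {p : Ω × Ω | sgn (f p.1 - f p.2) = -1} = {ω | f ω = 0} ×ˢ {ω | f ω = 1} := by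
  ext p
  rcases hf p.1 with h1 | h1 <;> rcases hf p.2 with h2 | h2 <;>
    simp [sgn, h1, h2, Set.mem_prod] <;> norm_num


/-- Theorem 2: in binary classification, comparative separation is equivalent to separation. -/
theorem comparative_separation_iff_separation
    (μ : Measure Ω) [IsProbabilityMeasure μ]
    (C Y A : Ω → ℝ) (hC : Measurable C) (hY : Measurable Y) (hA : Measurable A)
    (hCval : ∀ ω, C ω = 0 ∨ C ω = 1)
    (hYval : ∀ ω, Y ω = 0 ∨ Y ω = 1)
    (hAval : ∀ ω, A ω = 0 ∨ A ω = 1)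
    (hpos : ∀ y a : ℝ, (y = 0 ∨ y = 1) → (a = 0 ∨ a = 1) →
      0 < μ {ω | Y ω = y ∧ A ω = a})
    (hTPR : ∀ a : ℝ, (a = 0 ∨ a = 1) → 0 < TPR μ C Y A a)
    (hTNR : ∀ a : ℝ, (a = 0 ∨ a = 1) → 0 < TNR μ C Y A a) :
    CompSeparation μ C Y A ↔ Separation μ C Y A := by
  have mC : ∀ c : ℝ, MeasurableSet {ω | C ω = c} := fun c => hC (measurableSet_singleton c)
  have mAY : ∀ a y : ℝ, MeasurableSet {ω | A ω = a ∧ Y ω = y} :=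
    fun a y => (hA (measurableSet_singleton a)).inter (hY (measurableSet_singleton y))
  have hsetcomm : ∀ y a : ℝ, ({ω | Y ω = y ∧ A ω = a} : Set Ω) = {ω | A ω = a ∧ Y ω = y} := by
    intro y a; ext ω; exact and_comm
  have hposAY : ∀ y a : ℝ, (y = 0 ∨ y = 1) → (a = 0 ∨ a = 1) →
      0 < μ {ω | A ω = a ∧ Y ω = y} := by
    intro y a hy ha; rw [← hsetcomm]; exact hpos y a hy ha
  have hSC0 : ({ω | C ω = 0} : Set Ω) = {ω | C ω = 1}ᶜ := by
    ext ω; rcases hCval ω with h | h <;> simp [h]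
  have hSC1 : ({ω | C ω = 1} : Set Ω) = {ω | C ω = 0}ᶜ := by
    ext ω; rcases hCval ω with h | h <;> simp [h]
  have hCij1 : {p : Ω × Ω | Cij C p = 1} = {ω | C ω = 1} ×ˢ {ω | C ω = 0} :=
    sgn_pair_pos C hCval
  have hCijm : {p : Ω × Ω | Cij C p = -1} = {ω | C ω = 0} ×ˢ {ω | C ω = 1} :=
    sgn_pair_neg C hCval
  have hYij1 : {p : Ω × Ω | Yij Y p = 1} = {ω | Y ω = 1} ×ˢ {ω | Y ω = 0} :=
    sgn_pair_pos Y hYval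
  have hYijm : {p : Ω × Ω | Yij Y p = -1} = {ω | Y ω = 0} ×ˢ {ω | Y ω = 1} :=
    sgn_pair_neg Y hYval
  have hEvent1 : ∀ a₁ a₂ : ℝ, {p : Ω × Ω | Aij A p = (a₁, a₂) ∧ Yij Y p = 1}
      = {ω | A ω = a₁ ∧ Y ω = 1} ×ˢ {ω | A ω = a₂ ∧ Y ω = 0} := by
    intro a₁ a₂
    have : {p : Ω × Ω | Aij A p = (a₁, a₂) ∧ Yij Y p = 1}
        = ({p : Ω × Ω | Aij A p = (a₁, a₂)} ∩ {p | Yij Y p = 1}) := rfl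
    rw [this, hYij1, show {p : Ω × Ω | Aij A p = (a₁, a₂)}
        = {ω | A ω = a₁} ×ˢ {ω | A ω = a₂} from by
      ext p; simp [Aij, Prod.ext_iff, Set.mem_prod], Set.prod_inter_prod]
    rfl
  have hEventm : ∀ a₁ a₂ : ℝ, {p : Ω × Ω | Aij A p = (a₁, a₂) ∧ Yij Y p = -1}
      = {ω | A ω = a₁ ∧ Y ω = 0} ×ˢ {ω | A ω = a₂ ∧ Y ω = 1} := by
    intro a₁ a₂
    have : {p : Ω × Ω | Aij A p = (a₁, a₂) ∧ Yij Y p = -1}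
        = ({p : Ω × Ω | Aij A p = (a₁, a₂)} ∩ {p | Yij Y p = -1}) := rfl
    rw [this, hYijm, show {p : Ω × Ω | Aij A p = (a₁, a₂)}
        = {ω | A ω = a₁} ×ˢ {ω | A ω = a₂} from by
      ext p; simp [Aij, Prod.ext_iff, Set.mem_prod], Set.prod_inter_prod]
    rfl
  constructor
  · -- comparative separation → separation
    intro hcomp
    have hpairpos : ∀ a₁ a₂ : ℝ, (a₁ = 0 ∨ a₁ = 1) → (a₂ = 0 ∨ a₂ = 1) →
        0 < (μ.prod μ) {p : Ω × Ω | Aij A p = (a₁, a₂) ∧ Yij Y p = 1} := by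
      intro a₁ a₂ h1 h2
      rw [hEvent1 a₁ a₂, Measure.prod_prod]
      exact ENNReal.mul_pos (hposAY 1 a₁ (Or.inr rfl) h1).ne'
        (hposAY 0 a₂ (Or.inl rfl) h2).ne'
    have hK : ∀ a₁ a₂ : ℝ, (a₁ = 0 ∨ a₁ = 1) → (a₂ = 0 ∨ a₂ = 1) →
        condP μ {ω | C ω = 1} {ω | A ω = a₁ ∧ Y ω = 1}
          * condP μ {ω | C ω = 0} {ω | A ω = a₂ ∧ Y ω = 0}
        = condP μ {ω | C ω = 1} {ω | Y ω = 1} * condP μ {ω | C ω = 0} {ω | Y ω = 0} := by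
      intro a₁ a₂ h1 h2
      have step := hcomp 1 1 (Or.inr rfl) (Or.inr rfl) (a₁, a₂) (hpairpos a₁ a₂ h1 h2)
      rw [hEvent1 a₁ a₂, hCij1, hYij1, condP_prod, condP_prod] at step
      exact step
    have hT0pos : 0 < condP μ {ω | C ω = 1} {ω | A ω = 0 ∧ Y ω = 1} := by
      have := hTPR 0 (Or.inl rfl); unfold TPR at this; rwa [hsetcomm] at this
    have hN0pos : 0 < condP μ {ω | C ω = 0} {ω | A ω = 0 ∧ Y ω = 0} := by
      have := hTNR 0 (Or.inl rfl); unfold TNR at this; rwa [hsetcomm] at this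
    have hT01 : condP μ {ω | C ω = 1} {ω | A ω = 0 ∧ Y ω = 1}
        = condP μ {ω | C ω = 1} {ω | A ω = 1 ∧ Y ω = 1} :=
      mul_right_cancel₀ hN0pos.ne'
        ((hK 0 0 (Or.inl rfl) (Or.inl rfl)).trans (hK 1 0 (Or.inr rfl) (Or.inl rfl)).symm)
    have hN01 : condP μ {ω | C ω = 0} {ω | A ω = 0 ∧ Y ω = 0}
        = condP μ {ω | C ω = 0} {ω | A ω = 1 ∧ Y ω = 0} :=
      mul_left_cancel₀ hT0pos.ne'
        ((hK 0 0 (Or.inl rfl) (Or.inl rfl)).trans (hK 0 1 (Or.inl rfl) (Or.inr rfl)).symm)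
    have hT01' : condP μ {ω | C ω = 0} {ω | A ω = 0 ∧ Y ω = 1}
        = condP μ {ω | C ω = 0} {ω | A ω = 1 ∧ Y ω = 1} := by
      rw [hSC0, condP_compl μ _ _ (mC 1) (hposAY 1 0 (Or.inr rfl) (Or.inl rfl)).ne',
        condP_compl μ _ _ (mC 1) (hposAY 1 1 (Or.inr rfl) (Or.inr rfl)).ne', hT01]
    have hN01' : condP μ {ω | C ω = 1} {ω | A ω = 0 ∧ Y ω = 0}
        = condP μ {ω | C ω = 1} {ω | A ω = 1 ∧ Y ω = 0} := by
      rw [hSC1, condP_compl μ _ _ (mC 0) (hposAY 0 0 (Or.inl rfl) (Or.inl rfl)).ne',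
        condP_compl μ _ _ (mC 0) (hposAY 0 1 (Or.inl rfl) (Or.inr rfl)).ne', hN01]
    -- mixture machinery
    have hYsplit : ∀ y : ℝ, ({ω | Y ω = y} : Set Ω)
        = {ω | A ω = 0 ∧ Y ω = y} ∪ {ω | A ω = 1 ∧ Y ω = y} := by
      intro y; ext ω
      simp only [Set.mem_union, Set.mem_setOf_eq]
      constructor
      · intro h; rcases hAval ω with h' | h'
        · exact Or.inl ⟨h', h⟩
        · exact Or.inr ⟨h', h⟩
      · rintro (⟨-, h⟩ | ⟨-, h⟩) <;> exact h
    have hdisj : ∀ y : ℝ, Disjoint ({ω | A ω = 0 ∧ Y ω = y} : Set Ω)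
        {ω | A ω = 1 ∧ Y ω = y} := by
      intro y
      rw [Set.disjoint_left]
      rintro ω ⟨h0, -⟩ ⟨h1, -⟩
      rw [h0] at h1; norm_num at h1
    have key : ∀ S : Set Ω, MeasurableSet S → ∀ y : ℝ, (y = 0 ∨ y = 1) →
        condP μ S {ω | A ω = 0 ∧ Y ω = y} = condP μ S {ω | A ω = 1 ∧ Y ω = y} →
        ∀ a : ℝ, (a = 0 ∨ a = 1) →
        condP μ S {ω | A ω = a ∧ Y ω = y} = condP μ S {ω | Y ω = y} := by
      intro S hS y hy hconst a ha
      rw [hYsplit y, condP_union μ S _ _ hS (mAY 1 y) (hdisj y)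
        (hposAY y 0 hy (Or.inl rfl)).ne' (hposAY y 1 hy (Or.inr rfl)).ne' hconst]
      rcases ha with rfl | rfl
      · rfl
      · exact hconst.symm
    intro c y a hpos2
    have hy : y = 0 ∨ y = 1 := by
      by_contra hcon
      push_neg at hcon
      have hempty : {ω | A ω = a ∧ Y ω = y} = (∅ : Set Ω) := by
        ext ω
        simp only [Set.mem_setOf_eq, Set.mem_empty_iff_false, iff_false, not_and]
        intro _ hYω
        rcases hYval ω with h | h
        · exact hcon.1 (hYω.symm.trans h)
        · exact hcon.2 (hYω.symm.trans h)
      rw [hempty] at hpos2; simp at hpos2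
    have ha : a = 0 ∨ a = 1 := by
      by_contra hcon
      push_neg at hcon
      have hempty : {ω | A ω = a ∧ Y ω = y} = (∅ : Set Ω) := by
        ext ω
        simp only [Set.mem_setOf_eq, Set.mem_empty_iff_false, iff_false, not_and]
        intro hAω _
        rcases hAval ω with h | h
        · exact hcon.1 (hAω.symm.trans h)
        · exact hcon.2 (hAω.symm.trans h)
      rw [hempty] at hpos2; simp at hpos2
    by_cases hc : c = 0 ∨ c = 1
    · rcases hy with rfl | rfl <;> rcases hc with rfl | rfl
      · exact key _ (mC 0) 0 (Or.inl rfl) hN01 a ha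
      · exact key _ (mC 1) 0 (Or.inl rfl) hN01' a ha
      · exact key _ (mC 0) 1 (Or.inr rfl) hT01' a ha
      · exact key _ (mC 1) 1 (Or.inr rfl) hT01 a ha
    · push_neg at hc
      have hempty : {ω | C ω = c} = (∅ : Set Ω) := by
        ext ω
        simp only [Set.mem_setOf_eq, Set.mem_empty_iff_false, iff_false]
        intro h
        rcases hCval ω with h' | h'
        · exact hc.1 (h.symm.trans h')
        · exact hc.2 (h.symm.trans h')
      simp [condP, hempty]
  · -- separation → comparative separation
    intro hsep c y hc hy a hpa
    obtain ⟨a₁, a₂⟩ := a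
    rcases hy with rfl | rfl
    · -- y = -1
      rw [hEventm a₁ a₂] at hpa ⊢
      rw [Measure.prod_prod] at hpa
      have h1 : μ {ω | A ω = a₁ ∧ Y ω = 0} ≠ 0 := by
        intro h; rw [h] at hpa; simp at hpa
      have h2 : μ {ω | A ω = a₂ ∧ Y ω = 1} ≠ 0 := by
        intro h; rw [h] at hpa; simp at hpa
      have hp1 : 0 < μ {ω | A ω = a₁ ∧ Y ω = 0} := pos_iff_ne_zero.mpr h1
      have hp2 : 0 < μ {ω | A ω = a₂ ∧ Y ω = 1} := pos_iff_ne_zero.mpr h2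
      rcases hc with rfl | rfl
      · rw [hCijm, hYijm, condP_prod, condP_prod, hsep 0 0 a₁ hp1, hsep 1 1 a₂ hp2]
      · rw [hCij1, hYijm, condP_prod, condP_prod, hsep 1 0 a₁ hp1, hsep 0 1 a₂ hp2]
    · -- y = 1
      rw [hEvent1 a₁ a₂] at hpa ⊢
      rw [Measure.prod_prod] at hpa
      have h1 : μ {ω | A ω = a₁ ∧ Y ω = 1} ≠ 0 := by
        intro h; rw [h] at hpa; simp at hpa
      have h2 : μ {ω | A ω = a₂ ∧ Y ω = 0} ≠ 0 := by
        intro h; rw [h] at hpa; simp at hpa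
      have hp1 : 0 < μ {ω | A ω = a₁ ∧ Y ω = 1} := pos_iff_ne_zero.mpr h1
      have hp2 : 0 < μ {ω | A ω = a₂ ∧ Y ω = 0} := pos_iff_ne_zero.mpr h2
      rcases hc with rfl | rfl
      · rw [hCijm, hYij1, condP_prod, condP_prod, hsep 0 1 a₁ hp1, hsep 1 0 a₂ hp2]
      · rw [hCij1, hYij1, condP_prod, condP_prod, hsep 1 1 a₁ hp1, hsep 0 0 a₂ hp2]
end
end

section
/- Suppose A takes values in {0,1}, (μ⊗μ)(Y_ij = 1) > 0, and for every a ∈ {0,1} × {0,1} one has (μ⊗μ)(A_ij = a ∧ Y_ij = 1) > 0 and P(C_ij = 0 | A_ij = a ∧ Y_ij = y) = 0 for y ∈ {−1, 1} (no tied comparative predictions on comparable pairs). Then comparative separation holds if and only if the comparative true positive rate TPRp(a) is the same constant for all a ∈ {0,1} × {0,1}; moreover in that case the constant equals P(C_ij = 1 | Y_ij = 1) (Theorem 1). -/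
open MeasureTheory

noncomputable section

variable {Ω : Type*} [MeasurableSpace Ω]

/-! ### Auxiliary lemmas -/

lemma measurable_sgn : Measurable sgn := by
  unfold sgn
  exact Measurable.ite (measurableSet_lt measurable_const measurable_id)
    measurable_const (Measurable.ite (measurableSet_lt measurable_id measurable_const)
      measurable_const measurable_const)

lemma sgn_neg' (t : ℝ) : sgn (-t) = - sgn t := by
  unfold sgn
  rcases lt_trichotomy t 0 with h | h | h <;>
    simp [h, h.le, not_lt.mpr h.le, le_of_lt, neg_pos, h.not_gt]

lemma sgn_trichotomy (t : ℝ) : sgn t = 1 ∨ sgn t = -1 ∨ sgn t = 0 := by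
  unfold sgn; split_ifs <;> simp

lemma measurable_Cij {C : Ω → ℝ} (hC : Measurable C) : Measurable (Cij C) :=
  measurable_sgn.comp ((hC.comp measurable_fst).sub (hC.comp measurable_snd))

lemma measurable_Aij {A : Ω → ℝ} (hA : Measurable A) : Measurable (Aij A) :=
  (hA.comp measurable_fst).prodMk (hA.comp measurable_snd)

omit [MeasurableSpace Ω] in
lemma Cij_swap (C : Ω → ℝ) (p : Ω × Ω) : Cij C (Prod.swap p) = - Cij C p := by
  unfold Cij
  rw [show C (Prod.swap p).1 - C (Prod.swap p).2 = -(C p.1 - C p.2) by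
    simp [Prod.swap], sgn_neg']

lemma binary_split' {α : Type*} [MeasurableSpace α] (ν : Measure α) {P Q : Set α}
    (hP : MeasurableSet P) (hcov : ∀ x, x ∈ P ∨ x ∈ Q) (hdis : ∀ x, x ∈ P → x ∉ Q)
    (T : Set α) :
    ν T = ν (T ∩ P) + ν (T ∩ Q) := by
  have hd : T \ P = T ∩ Q := by
    ext x
    simp only [Set.mem_diff, Set.mem_inter_iff]
    constructor
    · rintro ⟨ht, hn⟩; exact ⟨ht, (hcov x).resolve_left hn⟩
    · rintro ⟨ht, hq⟩; exact ⟨ht, fun hp => hdis x hp hq⟩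
  rw [← measure_inter_add_diff T hP, hd]

lemma ternary_split {α : Type*} [MeasurableSpace α] (ν : Measure α) {f : α → ℝ}
    (hf : Measurable f) (hval : ∀ x, f x = 1 ∨ f x = -1 ∨ f x = 0) (T : Set α) :
    ν T = ν (T ∩ {x | f x = 1}) + ν (T ∩ {x | f x = -1}) + ν (T ∩ {x | f x = 0}) := by
  have e0 : T ∩ f ⁻¹' {1} = T ∩ {x | f x = 1} := rfl
  have e1 : (T \ f ⁻¹' {1}) ∩ f ⁻¹' {(-1 : ℝ)} = T ∩ {x | f x = -1} := by
    ext x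
    simp only [Set.mem_diff, Set.mem_inter_iff, Set.mem_setOf_eq, Set.mem_preimage,
      Set.mem_singleton_iff]
    constructor
    · rintro ⟨⟨ht, -⟩, hm⟩; exact ⟨ht, hm⟩
    · rintro ⟨ht, hm⟩; exact ⟨⟨ht, by rw [hm]; norm_num⟩, hm⟩
  have e2 : (T \ f ⁻¹' {1}) \ f ⁻¹' {(-1 : ℝ)} = T ∩ {x | f x = 0} := by
    ext x
    simp only [Set.mem_diff, Set.mem_inter_iff, Set.mem_setOf_eq, Set.mem_preimage,
      Set.mem_singleton_iff]
    constructor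
    · rintro ⟨⟨ht, h1⟩, h2⟩; exact ⟨ht, ((hval x).resolve_left h1).resolve_left h2⟩
    · rintro ⟨ht, h0⟩; exact ⟨⟨ht, by rw [h0]; norm_num⟩, by rw [h0]; norm_num⟩
  rw [← measure_inter_add_diff T (hf (measurableSet_singleton 1)),
    ← measure_inter_add_diff (T \ f ⁻¹' {(1 : ℝ)}) (hf (measurableSet_singleton (-1))),
    e0, e1, e2, ← add_assoc]

lemma toReal_add3 {a b c : ENNReal} (ha : a ≠ ⊤) (hb : b ≠ ⊤) (hc : c ≠ ⊤) :
    (a + b + c).toReal = a.toReal + b.toReal + c.toReal := by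
  rw [ENNReal.toReal_add (ENNReal.add_ne_top.mpr ⟨ha, hb⟩) hc, ENNReal.toReal_add ha hb]

lemma toReal_add4 {a b c d : ENNReal} (ha : a ≠ ⊤) (hb : b ≠ ⊤) (hc : c ≠ ⊤) (hd : d ≠ ⊤) :
    (a + b + c + d).toReal = a.toReal + b.toReal + c.toReal + d.toReal := by
  rw [ENNReal.toReal_add (ENNReal.add_ne_top.mpr ⟨ENNReal.add_ne_top.mpr ⟨ha, hb⟩, hc⟩) hd,
    toReal_add3 ha hb hc]

/-- Theorem 1: comparative separation holds iff the comparative true positive rate is the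
same constant across all four sensitive group pairs; moreover the constant is
`P(C_ij = 1 | Y_ij = 1)`. -/
theorem comparative_separation_iff_constant_TPRp
    (μ : Measure Ω) [IsProbabilityMeasure μ]
    (C Y A : Ω → ℝ) (hC : Measurable C) (hY : Measurable Y) (hA : Measurable A)
    (hAval : ∀ ω, A ω = 0 ∨ A ω = 1)
    (hYpos : 0 < (μ.prod μ) {p | Yij Y p = 1})
    (hApos : ∀ a₁ a₂ : ℝ, (a₁ = 0 ∨ a₁ = 1) → (a₂ = 0 ∨ a₂ = 1) →
      0 < (μ.prod μ) {p | Aij A p = (a₁, a₂) ∧ Yij Y p = 1})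
    (hnotie : ∀ a₁ a₂ : ℝ, (a₁ = 0 ∨ a₁ = 1) → (a₂ = 0 ∨ a₂ = 1) → ∀ y : ℝ,
      (y = -1 ∨ y = 1) →
      condP (μ.prod μ) {p | Cij C p = 0} {p | Aij A p = (a₁, a₂) ∧ Yij Y p = y} = 0) :
    (CompSeparation μ C Y A ↔
      ∃ k : ℝ, ∀ a₁ a₂ : ℝ, (a₁ = 0 ∨ a₁ = 1) → (a₂ = 0 ∨ a₂ = 1) →
        TPRp μ C Y A a₁ a₂ = k) ∧
    (CompSeparation μ C Y A →
      ∀ a₁ a₂ : ℝ, (a₁ = 0 ∨ a₁ = 1) → (a₂ = 0 ∨ a₂ = 1) →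
        TPRp μ C Y A a₁ a₂
          = condP (μ.prod μ) {p | Cij C p = 1} {p | Yij Y p = 1}) := by
  have mC : Measurable (Cij C) := measurable_Cij hC
  have mYf : Measurable (Yij Y) := measurable_Cij hY
  have mA : Measurable (Aij A) := measurable_Aij hA
  have mSC : ∀ c : ℝ, MeasurableSet {p : Ω × Ω | Cij C p = c} :=
    fun c => mC (measurableSet_singleton c)
  have mEY : ∀ y : ℝ, MeasurableSet {p : Ω × Ω | Yij Y p = y} :=
    fun y => mYf (measurableSet_singleton y)
  have mE : ∀ (a : ℝ × ℝ) (y : ℝ),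
      MeasurableSet {p : Ω × Ω | Aij A p = a ∧ Yij Y p = y} :=
    fun a y => (mA (measurableSet_singleton a)).inter (mYf (measurableSet_singleton y))
  have hfin : ∀ S : Set (Ω × Ω), (μ.prod μ) S ≠ ⊤ := fun S => measure_ne_top _ _
  have hswap : ∀ {S : Set (Ω × Ω)}, MeasurableSet S →
      (μ.prod μ) (Prod.swap ⁻¹' S) = (μ.prod μ) S := by
    intro S hS
    conv_rhs => rw [← Measure.prod_swap (μ := μ) (ν := μ)]
    rw [Measure.map_apply measurable_swap hS]
  have Yij_swap : ∀ p : Ω × Ω, Yij Y (Prod.swap p) = - Yij Y p := fun p => Cij_swap Y p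
  -- swap set identities
  have hsetswapE : ∀ c y a₁ a₂ : ℝ,
      {p : Ω × Ω | Cij C p = c} ∩ {p | Aij A p = (a₁, a₂) ∧ Yij Y p = y}
        = Prod.swap ⁻¹'
          ({p : Ω × Ω | Cij C p = -c} ∩ {p | Aij A p = (a₂, a₁) ∧ Yij Y p = -y}) := by
    intro c y a₁ a₂
    ext p
    simp only [Set.mem_inter_iff, Set.mem_setOf_eq, Set.mem_preimage, Cij_swap, Yij_swap,
      Aij, Prod.fst_swap, Prod.snd_swap, Prod.mk.injEq, neg_inj]
    tauto
  have hsetswapE0 : ∀ y a₁ a₂ : ℝ,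
      {p : Ω × Ω | Aij A p = (a₁, a₂) ∧ Yij Y p = y}
        = Prod.swap ⁻¹' {p : Ω × Ω | Aij A p = (a₂, a₁) ∧ Yij Y p = -y} := by
    intro y a₁ a₂
    ext p
    simp only [Set.mem_setOf_eq, Set.mem_preimage, Yij_swap, Aij, Prod.fst_swap,
      Prod.snd_swap, Prod.mk.injEq, neg_inj]
    tauto
  have hsetswapC : ∀ c y : ℝ,
      {p : Ω × Ω | Cij C p = c} ∩ {p | Yij Y p = y}
        = Prod.swap ⁻¹' ({p : Ω × Ω | Cij C p = -c} ∩ {p | Yij Y p = -y}) := by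
    intro c y
    ext p
    simp only [Set.mem_inter_iff, Set.mem_setOf_eq, Set.mem_preimage, Cij_swap, Yij_swap,
      neg_inj]
  have hsetswapY : ∀ y : ℝ,
      {p : Ω × Ω | Yij Y p = y} = Prod.swap ⁻¹' {p : Ω × Ω | Yij Y p = -y} := by
    intro y
    ext p
    simp only [Set.mem_setOf_eq, Set.mem_preimage, Yij_swap, neg_inj]
  -- swap conditional probability identities
  have hcondswapE : ∀ c y a₁ a₂ : ℝ,
      condP (μ.prod μ) {p | Cij C p = c} {p | Aij A p = (a₁, a₂) ∧ Yij Y p = y}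
        = condP (μ.prod μ) {p | Cij C p = -c} {p | Aij A p = (a₂, a₁) ∧ Yij Y p = -y} := by
    intro c y a₁ a₂
    unfold condP
    rw [hsetswapE c y a₁ a₂, hsetswapE0 y a₁ a₂,
      hswap ((mSC (-c)).inter (mE (a₂, a₁) (-y))), hswap (mE (a₂, a₁) (-y))]
  have hcondswapY : ∀ c y : ℝ,
      condP (μ.prod μ) {p | Cij C p = c} {p | Yij Y p = y}
        = condP (μ.prod μ) {p | Cij C p = -c} {p | Yij Y p = -y} := by
    intro c y
    unfold condP
    rw [hsetswapC c y, hsetswapY y, hswap ((mSC (-c)).inter (mEY (-y))), hswap (mEY (-y))]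
  -- positivity of denominators (in ℝ)
  have hdenE1 : ∀ a₁ a₂ : ℝ, (a₁ = 0 ∨ a₁ = 1) → (a₂ = 0 ∨ a₂ = 1) →
      0 < ((μ.prod μ) {p | Aij A p = (a₁, a₂) ∧ Yij Y p = 1}).toReal :=
    fun a₁ a₂ h1 h2 => ENNReal.toReal_pos (hApos a₁ a₂ h1 h2).ne' (hfin _)
  have hdenY1 : 0 < ((μ.prod μ) {p | Yij Y p = 1}).toReal :=
    ENNReal.toReal_pos hYpos.ne' (hfin _)
  -- four-way split along the sensitive attributes
  have hsplitA : ∀ T : Set (Ω × Ω),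
      (μ.prod μ) T
        = (μ.prod μ) (T ∩ {p | Aij A p = ((0 : ℝ), (0 : ℝ))})
          + (μ.prod μ) (T ∩ {p | Aij A p = ((0 : ℝ), (1 : ℝ))})
          + (μ.prod μ) (T ∩ {p | Aij A p = ((1 : ℝ), (0 : ℝ))})
          + (μ.prod μ) (T ∩ {p | Aij A p = ((1 : ℝ), (1 : ℝ))}) := by
    intro T
    have hP1 : MeasurableSet {p : Ω × Ω | A p.1 = 0} :=
      (hA.comp measurable_fst) (measurableSet_singleton 0)
    have hP2 : MeasurableSet {p : Ω × Ω | A p.2 = 0} :=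
      (hA.comp measurable_snd) (measurableSet_singleton 0)
    have hb1 := binary_split' (μ.prod μ) (P := {p : Ω × Ω | A p.1 = 0})
      (Q := {p : Ω × Ω | A p.1 = 1}) hP1
      (fun p => hAval p.1) (fun p (hp : A p.1 = 0) (hq : A p.1 = 1) => by
        rw [hp] at hq; norm_num at hq) T
    have hb2 : ∀ S : Set (Ω × Ω), (μ.prod μ) S
        = (μ.prod μ) (S ∩ {p : Ω × Ω | A p.2 = 0})
          + (μ.prod μ) (S ∩ {p : Ω × Ω | A p.2 = 1}) := by
      intro S
      exact binary_split' (μ.prod μ) (P := {p : Ω × Ω | A p.2 = 0})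
        (Q := {p : Ω × Ω | A p.2 = 1}) hP2
        (fun p => hAval p.2) (fun p (hp : A p.2 = 0) (hq : A p.2 = 1) => by
          rw [hp] at hq; norm_num at hq) S
    have hset : ∀ (u : Set (Ω × Ω)) (a b : ℝ),
        (T ∩ {p : Ω × Ω | A p.1 = a}) ∩ {p : Ω × Ω | A p.2 = b}
          = T ∩ {p | Aij A p = (a, b)} := by
      intro u a b
      ext p
      simp only [Set.mem_inter_iff, Set.mem_setOf_eq, Aij, Prod.mk.injEq]
      tauto
    rw [hb1, hb2 (T ∩ {p : Ω × Ω | A p.1 = 0}), hb2 (T ∩ {p : Ω × Ω | A p.1 = 1}),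
      hset ∅ 0 0, hset ∅ 0 1, hset ∅ 1 0, hset ∅ 1 1, ← add_assoc]
  -- reshaping intersections
  have hinter : ∀ (c a b : ℝ),
      ({p : Ω × Ω | Cij C p = c} ∩ {p | Yij Y p = 1}) ∩ {p | Aij A p = (a, b)}
        = {p : Ω × Ω | Cij C p = c} ∩ {p | Aij A p = (a, b) ∧ Yij Y p = 1} := by
    intro c a b
    ext p
    simp only [Set.mem_inter_iff, Set.mem_setOf_eq]
    tauto
  have hinter2 : ∀ a b : ℝ,
      {p : Ω × Ω | Yij Y p = 1} ∩ {p | Aij A p = (a, b)}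
        = {p : Ω × Ω | Aij A p = (a, b) ∧ Yij Y p = 1} := by
    intro a b
    ext p
    simp only [Set.mem_inter_iff, Set.mem_setOf_eq]
    tauto
  -- the forward direction and the "moreover" part
  have hfwd : CompSeparation μ C Y A →
      ∀ a₁ a₂ : ℝ, (a₁ = 0 ∨ a₁ = 1) → (a₂ = 0 ∨ a₂ = 1) →
        TPRp μ C Y A a₁ a₂
          = condP (μ.prod μ) {p | Cij C p = 1} {p | Yij Y p = 1} := by
    intro hsep a₁ a₂ h1 h2
    exact hsep 1 1 (Or.inr rfl) (Or.inr rfl) (a₁, a₂) (hApos a₁ a₂ h1 h2)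
  refine ⟨⟨fun hsep => ⟨condP (μ.prod μ) {p | Cij C p = 1} {p | Yij Y p = 1},
    fun a₁ a₂ h1 h2 => hfwd hsep a₁ a₂ h1 h2⟩, ?_⟩, hfwd⟩
  -- backward direction
  rintro ⟨k, hk⟩
  -- numerators for C_ij = 1 on Y_ij = 1
  have hnum1 : ∀ a₁ a₂ : ℝ, (a₁ = 0 ∨ a₁ = 1) → (a₂ = 0 ∨ a₂ = 1) →
      ((μ.prod μ) ({p | Cij C p = 1} ∩ {p | Aij A p = (a₁, a₂) ∧ Yij Y p = 1})).toReal
        = k * ((μ.prod μ) {p | Aij A p = (a₁, a₂) ∧ Yij Y p = 1}).toReal := by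
    intro a₁ a₂ h1 h2
    have h := hk a₁ a₂ h1 h2
    unfold TPRp condP at h
    rw [div_eq_iff (hdenE1 a₁ a₂ h1 h2).ne'] at h
    exact h
  -- numerators for C_ij = 0 vanish
  have hnum0 : ∀ a₁ a₂ : ℝ, (a₁ = 0 ∨ a₁ = 1) → (a₂ = 0 ∨ a₂ = 1) →
      ((μ.prod μ) ({p | Cij C p = 0} ∩ {p | Aij A p = (a₁, a₂) ∧ Yij Y p = 1})).toReal
        = 0 := by
    intro a₁ a₂ h1 h2
    have h := hnotie a₁ a₂ h1 h2 1 (Or.inr rfl)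
    unfold condP at h
    exact (div_eq_zero_iff.mp h).resolve_right (hdenE1 a₁ a₂ h1 h2).ne'
  -- total numerator over Y_ij = 1 for C_ij = 1
  have hN1 : ((μ.prod μ) ({p | Cij C p = 1} ∩ {p | Yij Y p = 1})).toReal
      = k * ((μ.prod μ) {p | Yij Y p = 1}).toReal := by
    have h1 := hsplitA ({p | Cij C p = 1} ∩ {p | Yij Y p = 1})
    rw [hinter 1 0 0, hinter 1 0 1, hinter 1 1 0, hinter 1 1 1] at h1
    have h2 := hsplitA ({p : Ω × Ω | Yij Y p = 1})
    rw [hinter2 0 0, hinter2 0 1, hinter2 1 0, hinter2 1 1] at h2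
    have h1' := congrArg ENNReal.toReal h1
    rw [toReal_add4 (hfin _) (hfin _) (hfin _) (hfin _)] at h1'
    have h2' := congrArg ENNReal.toReal h2
    rw [toReal_add4 (hfin _) (hfin _) (hfin _) (hfin _)] at h2'
    rw [h1', h2', hnum1 0 0 (Or.inl rfl) (Or.inl rfl), hnum1 0 1 (Or.inl rfl) (Or.inr rfl),
      hnum1 1 0 (Or.inr rfl) (Or.inl rfl), hnum1 1 1 (Or.inr rfl) (Or.inr rfl)]
    ring
  -- total numerator over Y_ij = 1 for C_ij = 0
  have hN0 : ((μ.prod μ) ({p | Cij C p = 0} ∩ {p | Yij Y p = 1})).toReal = 0 := by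
    have h1 := hsplitA ({p | Cij C p = 0} ∩ {p | Yij Y p = 1})
    rw [hinter 0 0 0, hinter 0 0 1, hinter 0 1 0, hinter 0 1 1] at h1
    have h1' := congrArg ENNReal.toReal h1
    rw [toReal_add4 (hfin _) (hfin _) (hfin _) (hfin _)] at h1'
    rw [h1', hnum0 0 0 (Or.inl rfl) (Or.inl rfl), hnum0 0 1 (Or.inl rfl) (Or.inr rfl),
      hnum0 1 0 (Or.inr rfl) (Or.inl rfl), hnum0 1 1 (Or.inr rfl) (Or.inr rfl)]
    ring
  -- from trichotomy of Cij: numerator for C_ij = -1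
  have key : ∀ E' : Set (Ω × Ω),
      ((μ.prod μ) ({p | Cij C p = 1} ∩ E')).toReal = k * ((μ.prod μ) E').toReal →
      ((μ.prod μ) ({p | Cij C p = 0} ∩ E')).toReal = 0 →
      ((μ.prod μ) ({p | Cij C p = -1} ∩ E')).toReal
        = (1 - k) * ((μ.prod μ) E').toReal := by
    intro E' h1 h0
    have ht := congrArg ENNReal.toReal
      (ternary_split (μ.prod μ) mC (fun p => sgn_trichotomy _) E')
    rw [toReal_add3 (hfin _) (hfin _) (hfin _)] at ht
    rw [Set.inter_comm E' {x | Cij C x = 1}, Set.inter_comm E' {x | Cij C x = -1},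
      Set.inter_comm E' {x | Cij C x = 0}] at ht
    rw [h1, h0] at ht
    linarith
  -- conditional probabilities on Y_ij = 1
  have hcond1Y : condP (μ.prod μ) {p | Cij C p = 1} {p | Yij Y p = 1} = k := by
    unfold condP
    rw [hN1, mul_div_assoc, div_self hdenY1.ne', mul_one]
  have hcondm1Y : condP (μ.prod μ) {p | Cij C p = -1} {p | Yij Y p = 1} = 1 - k := by
    unfold condP
    rw [key _ hN1 hN0, mul_div_assoc, div_self hdenY1.ne', mul_one]
  have hcondm1E : ∀ a₁ a₂ : ℝ, (a₁ = 0 ∨ a₁ = 1) → (a₂ = 0 ∨ a₂ = 1) →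
      condP (μ.prod μ) {p | Cij C p = -1} {p | Aij A p = (a₁, a₂) ∧ Yij Y p = 1}
        = 1 - k := by
    intro a₁ a₂ h1 h2
    unfold condP
    rw [key _ (hnum1 a₁ a₂ h1 h2) (hnum0 a₁ a₂ h1 h2), mul_div_assoc,
      div_self (hdenE1 a₁ a₂ h1 h2).ne', mul_one]
  have hcond1E : ∀ a₁ a₂ : ℝ, (a₁ = 0 ∨ a₁ = 1) → (a₂ = 0 ∨ a₂ = 1) →
      condP (μ.prod μ) {p | Cij C p = 1} {p | Aij A p = (a₁, a₂) ∧ Yij Y p = 1} = k :=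
    fun a₁ a₂ h1 h2 => hk a₁ a₂ h1 h2
  -- assemble comparative separation
  intro c y hc hy a hpos
  obtain ⟨a₁, a₂⟩ := a
  have hmem : (a₁ = 0 ∨ a₁ = 1) ∧ (a₂ = 0 ∨ a₂ = 1) := by
    by_contra h
    have hemp : {p : Ω × Ω | Aij A p = (a₁, a₂) ∧ Yij Y p = y} = ∅ := by
      apply Set.eq_empty_iff_forall_notMem.mpr
      intro p hp
      apply h
      have e1 : A p.1 = a₁ := congrArg Prod.fst hp.1
      have e2 : A p.2 = a₂ := congrArg Prod.snd hp.1
      exact ⟨e1 ▸ hAval p.1, e2 ▸ hAval p.2⟩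
    rw [hemp] at hpos
    simp at hpos
  obtain ⟨ha1, ha2⟩ := hmem
  rcases hy with hy | hy <;> subst hy
  · -- y = -1: reduce to y = 1 via swapping
    rw [hcondswapE c (-1) a₁ a₂, hcondswapY c (-1), neg_neg]
    rcases hc with hc | hc <;> subst hc
    · rw [neg_neg, hcond1E a₂ a₁ ha2 ha1, hcond1Y]
    · rw [show -(1 : ℝ) = (-1 : ℝ) from rfl, hcondm1E a₂ a₁ ha2 ha1, hcondm1Y]
  · -- y = 1
    rcases hc with hc | hc <;> subst hc
    · rw [hcondm1E a₁ a₂ ha1 ha2, hcondm1Y]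
    · rw [hcond1E a₁ a₂ ha1 ha2, hcond1Y]
end
end

section
/- Suppose C, Y, A take values in {0,1} and a₁, a₂ ∈ {0,1} satisfy μ(Y = 1 ∧ A = a₁) > 0 and μ(Y = 0 ∧ A = a₂) > 0. Then the comparative true positive rate factorizes as TPRp(a₁,a₂) = TPR(a₁) · TNR(a₂), i.e., P(C_ij = 1 | A_ij = (a₁,a₂) ∧ Y_ij = 1) = P(C = 1 | Y = 1 ∧ A = a₁) · P(C = 0 | Y = 0 ∧ A = a₂). -/
open MeasureTheory

noncomputable section

variable {Ω : Type*} [MeasurableSpace Ω]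

/-- In binary classification, the comparative true positive rate factorizes:
`TPRp(a₁,a₂) = TPR(a₁) · TNR(a₂)`. -/
theorem TPRp_eq_TPR_mul_TNR
    (μ : Measure Ω) [IsProbabilityMeasure μ]
    (C Y A : Ω → ℝ) (hC : Measurable C) (hY : Measurable Y) (hA : Measurable A)
    (hCval : ∀ ω, C ω = 0 ∨ C ω = 1)
    (hYval : ∀ ω, Y ω = 0 ∨ Y ω = 1)
    (hAval : ∀ ω, A ω = 0 ∨ A ω = 1)
    (a₁ a₂ : ℝ) (ha₁ : a₁ = 0 ∨ a₁ = 1) (ha₂ : a₂ = 0 ∨ a₂ = 1)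
    (hpos₁ : 0 < μ {ω | Y ω = 1 ∧ A ω = a₁})
    (hpos₂ : 0 < μ {ω | Y ω = 0 ∧ A ω = a₂}) :
    TPRp μ C Y A a₁ a₂ = TPR μ C Y A a₁ * TNR μ C Y A a₂ := by
  have key : ∀ (f : Ω → ℝ), (∀ ω, f ω = 0 ∨ f ω = 1) →
      ∀ p : Ω × Ω, sgn (f p.1 - f p.2) = 1 ↔ f p.1 = 1 ∧ f p.2 = 0 := by
    intro f hf p
    rcases hf p.1 with h1 | h1 <;> rcases hf p.2 with h2 | h2 <;>
      simp [sgn, h1, h2] <;> norm_num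
  have hS : {p : Ω × Ω | Aij A p = (a₁, a₂) ∧ Yij Y p = 1}
      = {ω | Y ω = 1 ∧ A ω = a₁} ×ˢ {ω | Y ω = 0 ∧ A ω = a₂} := by
    ext p
    simp only [Set.mem_setOf_eq, Set.mem_prod, Aij, Yij, Prod.mk.injEq,
      key Y hYval p]
    tauto
  have hN : {p : Ω × Ω | Cij C p = 1} ∩ {p | Aij A p = (a₁, a₂) ∧ Yij Y p = 1}
      = ({ω | C ω = 1} ∩ {ω | Y ω = 1 ∧ A ω = a₁}) ×ˢ
        ({ω | C ω = 0} ∩ {ω | Y ω = 0 ∧ A ω = a₂}) := by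
    ext p
    simp only [Set.mem_inter_iff, Set.mem_setOf_eq, Set.mem_prod, Aij, Yij, Cij,
      Prod.mk.injEq, key Y hYval p, key C hCval p]
    tauto
  have hfin : ∀ s : Set Ω, μ s ≠ ⊤ := fun s => measure_ne_top μ s
  unfold TPRp TPR TNR condP
  rw [hN, hS, Measure.prod_prod, Measure.prod_prod,
    ENNReal.toReal_mul, ENNReal.toReal_mul, div_mul_div_comm]
end
end

section
/- Suppose C, Y, A take values in {0,1}, μ(Y = y ∧ A = a) > 0 for all y, a ∈ {0,1}, and TPR(a) > 0 and TNR(a) > 0 for each a ∈ {0,1}. Then comparative separation holds if and only if both of the two null hypotheses hold: TPRp(1,0) = TPRp(0,1) and TPRp(1,1) = TPRp(0,0) (Proposition: in binary classification, comparative separation is satisfied if and only if both null hypotheses H₀ᶜ and H₀ʷ are true). -/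
open MeasureTheory

noncomputable section

variable {Ω : Type*} [MeasurableSpace Ω]

lemma sgn_eq_one_iff {u v : ℝ} (hu : u = 0 ∨ u = 1) (hv : v = 0 ∨ v = 1) :
    sgn (u - v) = 1 ↔ (u = 1 ∧ v = 0) := by
  rcases hu with h|h <;> rcases hv with h'|h' <;> subst h <;> subst h' <;>
    norm_num [sgn]

lemma sgn_eq_neg_one_iff {u v : ℝ} (hu : u = 0 ∨ u = 1) (hv : v = 0 ∨ v = 1) :
    sgn (u - v) = -1 ↔ (u = 0 ∧ v = 1) := by
  rcases hu with h|h <;> rcases hv with h'|h' <;> subst h <;> subst h' <;>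
    norm_num [sgn]

lemma condP_prod_s4 (μ : Measure Ω) [SFinite μ] (s₁ s₂ t₁ t₂ : Set Ω) :
    condP (μ.prod μ) (s₁ ×ˢ s₂) (t₁ ×ˢ t₂) = condP μ s₁ t₁ * condP μ s₂ t₂ := by
  unfold condP
  rw [Set.prod_inter_prod, Measure.prod_prod, Measure.prod_prod,
    ENNReal.toReal_mul, ENNReal.toReal_mul, mul_div_mul_comm]

lemma condP_binary_sum (μ : Measure Ω) [IsFiniteMeasure μ] {C : Ω → ℝ}
    (hC : Measurable C) (hCval : ∀ ω, C ω = 0 ∨ C ω = 1)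
    {E : Set Ω} (hpos : 0 < μ E) :
    condP μ {ω | C ω = 0} E + condP μ {ω | C ω = 1} E = 1 := by
  have hm : MeasurableSet {ω | C ω = 1} := hC (measurableSet_singleton 1)
  have key := measure_inter_add_diff (μ := μ) E hm
  have h1 : E ∩ {ω | C ω = 1} = {ω | C ω = 1} ∩ E := Set.inter_comm _ _
  have h2 : E \ {ω | C ω = 1} = {ω | C ω = 0} ∩ E := by
    ext ω; rcases hCval ω with h|h <;>
      simp [Set.mem_diff, Set.mem_setOf_eq, h, Set.mem_inter_iff] <;> norm_num
  rw [h1, h2] at key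
  unfold condP
  have hE : (μ E).toReal
      = (μ ({ω | C ω = 0} ∩ E)).toReal + (μ ({ω | C ω = 1} ∩ E)).toReal := by
    rw [← ENNReal.toReal_add (measure_ne_top _ _) (measure_ne_top _ _), add_comm, key]
  have hEpos : 0 < (μ E).toReal := ENNReal.toReal_pos hpos.ne' (measure_ne_top _ _)
  rw [← add_div, ← hE, div_self hEpos.ne']

lemma condP_union_s4 (μ : Measure Ω) [IsFiniteMeasure μ] {F E₀ E₁ : Set Ω}
    (hF : MeasurableSet F) (hE₁ : MeasurableSet E₁) (hd : Disjoint E₀ E₁)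
    (h₀ : 0 < μ E₀) (h₁ : 0 < μ E₁) {r : ℝ}
    (hr₀ : condP μ F E₀ = r) (hr₁ : condP μ F E₁ = r) :
    condP μ F (E₀ ∪ E₁) = r := by
  have hx₀ : 0 < (μ E₀).toReal := ENNReal.toReal_pos h₀.ne' (measure_ne_top _ _)
  have hx₁ : 0 < (μ E₁).toReal := ENNReal.toReal_pos h₁.ne' (measure_ne_top _ _)
  have hU : (μ (E₀ ∪ E₁)).toReal = (μ E₀).toReal + (μ E₁).toReal := by
    rw [measure_union hd hE₁, ENNReal.toReal_add (measure_ne_top _ _) (measure_ne_top _ _)]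
  have hFU : (μ (F ∩ (E₀ ∪ E₁))).toReal
      = (μ (F ∩ E₀)).toReal + (μ (F ∩ E₁)).toReal := by
    rw [Set.inter_union_distrib_left,
      measure_union (hd.mono Set.inter_subset_right Set.inter_subset_right) (hF.inter hE₁),
      ENNReal.toReal_add (measure_ne_top _ _) (measure_ne_top _ _)]
  have e₀ : (μ (F ∩ E₀)).toReal = r * (μ E₀).toReal := by
    rw [← hr₀]; unfold condP; field_simp
  have e₁ : (μ (F ∩ E₁)).toReal = r * (μ E₁).toReal := by
    rw [← hr₁]; unfold condP; field_simp
  unfold condP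
  rw [hU, hFU, e₀, e₁, div_eq_iff (by positivity)]
  ring

lemma Cij_eq_one (C : Ω → ℝ) (hCval : ∀ ω, C ω = 0 ∨ C ω = 1) :
    {p : Ω × Ω | Cij C p = 1} = {ω | C ω = 1} ×ˢ {ω | C ω = 0} := by
  ext p
  simp only [Set.mem_setOf_eq, Set.mem_prod, Cij]
  exact sgn_eq_one_iff (hCval p.1) (hCval p.2)

lemma Cij_eq_neg_one (C : Ω → ℝ) (hCval : ∀ ω, C ω = 0 ∨ C ω = 1) :
    {p : Ω × Ω | Cij C p = -1} = {ω | C ω = 0} ×ˢ {ω | C ω = 1} := by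
  ext p
  simp only [Set.mem_setOf_eq, Set.mem_prod, Cij]
  exact sgn_eq_neg_one_iff (hCval p.1) (hCval p.2)

lemma pair_set_one (Y A : Ω → ℝ) (hYval : ∀ ω, Y ω = 0 ∨ Y ω = 1) (a₁ a₂ : ℝ) :
    {p : Ω × Ω | Aij A p = (a₁, a₂) ∧ Yij Y p = 1}
      = {ω | Y ω = 1 ∧ A ω = a₁} ×ˢ {ω | Y ω = 0 ∧ A ω = a₂} := by
  ext p
  simp only [Set.mem_setOf_eq, Set.mem_prod, Aij, Yij, Prod.mk.injEq]
  rw [sgn_eq_one_iff (hYval p.1) (hYval p.2)]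
  tauto

lemma pair_set_neg (Y A : Ω → ℝ) (hYval : ∀ ω, Y ω = 0 ∨ Y ω = 1) (a₁ a₂ : ℝ) :
    {p : Ω × Ω | Aij A p = (a₁, a₂) ∧ Yij Y p = -1}
      = {ω | Y ω = 0 ∧ A ω = a₁} ×ˢ {ω | Y ω = 1 ∧ A ω = a₂} := by
  ext p
  simp only [Set.mem_setOf_eq, Set.mem_prod, Aij, Yij, Prod.mk.injEq]
  rw [sgn_eq_neg_one_iff (hYval p.1) (hYval p.2)]
  tauto

lemma pairY_one (Y : Ω → ℝ) (hYval : ∀ ω, Y ω = 0 ∨ Y ω = 1) :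
    {p : Ω × Ω | Yij Y p = 1} = {ω | Y ω = 1} ×ˢ {ω | Y ω = 0} := by
  ext p
  simp only [Set.mem_setOf_eq, Set.mem_prod, Yij]
  exact sgn_eq_one_iff (hYval p.1) (hYval p.2)

lemma pairY_neg (Y : Ω → ℝ) (hYval : ∀ ω, Y ω = 0 ∨ Y ω = 1) :
    {p : Ω × Ω | Yij Y p = -1} = {ω | Y ω = 0} ×ˢ {ω | Y ω = 1} := by
  ext p
  simp only [Set.mem_setOf_eq, Set.mem_prod, Yij]
  exact sgn_eq_neg_one_iff (hYval p.1) (hYval p.2)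


/-- Proposition: in binary classification, comparative separation holds iff both null
hypotheses `H₀ᶜ : TPRp(1,0) = TPRp(0,1)` and `H₀ʷ : TPRp(1,1) = TPRp(0,0)` hold. -/
theorem comparative_separation_iff_null_hypotheses
    (μ : Measure Ω) [IsProbabilityMeasure μ]
    (C Y A : Ω → ℝ) (hC : Measurable C) (hY : Measurable Y) (hA : Measurable A)
    (hCval : ∀ ω, C ω = 0 ∨ C ω = 1)
    (hYval : ∀ ω, Y ω = 0 ∨ Y ω = 1)
    (hAval : ∀ ω, A ω = 0 ∨ A ω = 1)
    (hpos : ∀ y a : ℝ, (y = 0 ∨ y = 1) → (a = 0 ∨ a = 1) →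
      0 < μ {ω | Y ω = y ∧ A ω = a})
    (hTPR : ∀ a : ℝ, (a = 0 ∨ a = 1) → 0 < TPR μ C Y A a)
    (hTNR : ∀ a : ℝ, (a = 0 ∨ a = 1) → 0 < TNR μ C Y A a) :
    CompSeparation μ C Y A ↔
      (TPRp μ C Y A 1 0 = TPRp μ C Y A 0 1 ∧ TPRp μ C Y A 1 1 = TPRp μ C Y A 0 0) := by
  have mC1 : MeasurableSet {ω | C ω = 1} := hC (measurableSet_singleton 1)
  have mC0 : MeasurableSet {ω | C ω = 0} := hC (measurableSet_singleton 0)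
  have mE : ∀ y a : ℝ, MeasurableSet {ω | Y ω = y ∧ A ω = a} := fun y a =>
    (hY (measurableSet_singleton y)).inter (hA (measurableSet_singleton a))
  have hposY : ∀ y : ℝ, (y = 0 ∨ y = 1) → 0 < μ {ω | Y ω = y} := fun y hy =>
    lt_of_lt_of_le (hpos y 0 hy (Or.inl rfl)) (measure_mono (fun ω h => h.1))
  have hTPRp : ∀ a₁ a₂ : ℝ, TPRp μ C Y A a₁ a₂ = TPR μ C Y A a₁ * TNR μ C Y A a₂ := by
    intro a₁ a₂
    unfold TPRp TPR TNR
    rw [pair_set_one Y A hYval, Cij_eq_one C hCval, condP_prod_s4]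
  have hppos : ∀ a₁ a₂ : ℝ, (a₁ = 0 ∨ a₁ = 1) → (a₂ = 0 ∨ a₂ = 1) →
      0 < (μ.prod μ) {p | Aij A p = (a₁, a₂) ∧ Yij Y p = 1} := by
    intro a₁ a₂ h₁ h₂
    rw [pair_set_one Y A hYval, Measure.prod_prod]
    exact ENNReal.mul_pos (hpos 1 a₁ (Or.inr rfl) h₁).ne' (hpos 0 a₂ (Or.inl rfl) h₂).ne'
  constructor
  · intro hs
    have e1 := hs 1 1 (Or.inr rfl) (Or.inr rfl) (1, 0) (hppos 1 0 (Or.inr rfl) (Or.inl rfl))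
    have e2 := hs 1 1 (Or.inr rfl) (Or.inr rfl) (0, 1) (hppos 0 1 (Or.inl rfl) (Or.inr rfl))
    have e3 := hs 1 1 (Or.inr rfl) (Or.inr rfl) (1, 1) (hppos 1 1 (Or.inr rfl) (Or.inr rfl))
    have e4 := hs 1 1 (Or.inr rfl) (Or.inr rfl) (0, 0) (hppos 0 0 (Or.inl rfl) (Or.inl rfl))
    exact ⟨e1.trans e2.symm, e3.trans e4.symm⟩
  · rintro ⟨h1, h2⟩
    simp only [hTPRp] at h1 h2
    have hT0 := hTPR 0 (Or.inl rfl)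
    have hT1 := hTPR 1 (Or.inr rfl)
    have hN0 := hTNR 0 (Or.inl rfl)
    have hN1 := hTNR 1 (Or.inr rfl)
    have hT : TPR μ C Y A 1 = TPR μ C Y A 0 := by
      have key : (TPR μ C Y A 1 - TPR μ C Y A 0) * (TNR μ C Y A 0 + TNR μ C Y A 1) = 0 := by
        linear_combination h1 + h2
      rcases mul_eq_zero.1 key with h | h
      · linarith
      · linarith
    have hN : TNR μ C Y A 1 = TNR μ C Y A 0 := by
      rw [hT] at h2
      exact mul_left_cancel₀ (ne_of_gt hT0) h2
    have hTa : ∀ a : ℝ, (a = 0 ∨ a = 1) →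
        condP μ {ω | C ω = 1} {ω | Y ω = 1 ∧ A ω = a} = TPR μ C Y A 0 := by
      rintro a (rfl | rfl)
      · rfl
      · exact hT
    have hNa : ∀ a : ℝ, (a = 0 ∨ a = 1) →
        condP μ {ω | C ω = 0} {ω | Y ω = 0 ∧ A ω = a} = TNR μ C Y A 0 := by
      rintro a (rfl | rfl)
      · rfl
      · exact hN
    have hdisj : ∀ y : ℝ, Disjoint {ω | Y ω = y ∧ A ω = 0} {ω | Y ω = y ∧ A ω = 1} := by
      intro y
      rw [Set.disjoint_left]
      rintro ω ⟨_, h0⟩ ⟨_, h1⟩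
      rw [h0] at h1
      norm_num at h1
    have hu : ∀ y : ℝ, {ω | Y ω = y} = {ω | Y ω = y ∧ A ω = 0} ∪ {ω | Y ω = y ∧ A ω = 1} := by
      intro y
      ext ω
      rcases hAval ω with h | h <;> simp [Set.mem_setOf_eq, h] <;> norm_num
    have hTb : condP μ {ω | C ω = 1} {ω | Y ω = 1} = TPR μ C Y A 0 := by
      rw [hu 1]
      exact condP_union_s4 μ mC1 (mE 1 1) (hdisj 1)
        (hpos 1 0 (Or.inr rfl) (Or.inl rfl)) (hpos 1 1 (Or.inr rfl) (Or.inr rfl))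
        (hTa 0 (Or.inl rfl)) (hTa 1 (Or.inr rfl))
    have hNb : condP μ {ω | C ω = 0} {ω | Y ω = 0} = TNR μ C Y A 0 := by
      rw [hu 0]
      exact condP_union_s4 μ mC0 (mE 0 1) (hdisj 0)
        (hpos 0 0 (Or.inl rfl) (Or.inl rfl)) (hpos 0 1 (Or.inl rfl) (Or.inr rfl))
        (hNa 0 (Or.inl rfl)) (hNa 1 (Or.inr rfl))
    have hc0a : ∀ a : ℝ, (a = 0 ∨ a = 1) →
        condP μ {ω | C ω = 0} {ω | Y ω = 1 ∧ A ω = a} = 1 - TPR μ C Y A 0 := by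
      intro a ha
      have hs := condP_binary_sum μ hC hCval (hpos 1 a (Or.inr rfl) ha)
      have := hTa a ha
      linarith
    have hc1a : ∀ a : ℝ, (a = 0 ∨ a = 1) →
        condP μ {ω | C ω = 1} {ω | Y ω = 0 ∧ A ω = a} = 1 - TNR μ C Y A 0 := by
      intro a ha
      have hs := condP_binary_sum μ hC hCval (hpos 0 a (Or.inl rfl) ha)
      have := hNa a ha
      linarith
    have hc0Y1 : condP μ {ω | C ω = 0} {ω | Y ω = 1} = 1 - TPR μ C Y A 0 := by
      have hs := condP_binary_sum μ hC hCval (hposY 1 (Or.inr rfl))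
      linarith
    have hc1Y0 : condP μ {ω | C ω = 1} {ω | Y ω = 0} = 1 - TNR μ C Y A 0 := by
      have hs := condP_binary_sum μ hC hCval (hposY 0 (Or.inl rfl))
      linarith
    intro c y hc hy a hpa
    obtain ⟨a₁, a₂⟩ := a
    obtain ⟨p, hp1, hp2⟩ := nonempty_of_measure_ne_zero hpa.ne'
    have e1 : A p.1 = a₁ := congrArg Prod.fst hp1
    have e2 : A p.2 = a₂ := congrArg Prod.snd hp1
    have ha₁ : a₁ = 0 ∨ a₁ = 1 := e1 ▸ hAval p.1
    have ha₂ : a₂ = 0 ∨ a₂ = 1 := e2 ▸ hAval p.2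
    rcases hc with rfl | rfl <;> rcases hy with rfl | rfl
    · -- c = -1, y = -1
      rw [Cij_eq_neg_one C hCval, pair_set_neg Y A hYval, pairY_neg Y hYval,
        condP_prod_s4, condP_prod_s4, hNa a₁ ha₁, hTa a₂ ha₂, hNb, hTb]
    · -- c = -1, y = 1
      rw [Cij_eq_neg_one C hCval, pair_set_one Y A hYval, pairY_one Y hYval,
        condP_prod_s4, condP_prod_s4, hc0a a₁ ha₁, hc1a a₂ ha₂, hc0Y1, hc1Y0]
    · -- c = 1, y = -1
      rw [Cij_eq_one C hCval, pair_set_neg Y A hYval, pairY_neg Y hYval,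
        condP_prod_s4, condP_prod_s4, hc1a a₁ ha₁, hc0a a₂ ha₂, hc1Y0, hc0Y1]
    · -- c = 1, y = 1
      rw [Cij_eq_one C hCval, pair_set_one Y A hYval, pairY_one Y hYval,
        condP_prod_s4, condP_prod_s4, hTa a₁ ha₁, hNa a₂ ha₂, hTb, hNb]
end
end

section
/- Suppose C, Y, A take values in {0,1}, μ(Y = y ∧ A = a) > 0 for all y, a ∈ {0,1}, TPR(a) > 0 and TNR(a) > 0 for each a ∈ {0,1}, and the comparative true positive rate TPRp(a₁,a₂) is the same for all (a₁,a₂) ∈ {0,1} × {0,1}. Then TPR(1) = TPR(0) and TNR(1) = TNR(0). -/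
open MeasureTheory

noncomputable section

variable {Ω : Type*} [MeasurableSpace Ω]

lemma sgn_sub_eq_one_iff {x y : ℝ} (hx : x = 0 ∨ x = 1) (hy : y = 0 ∨ y = 1) :
    sgn (x - y) = 1 ↔ x = 1 ∧ y = 0 := by
  rcases hx with h | h <;> rcases hy with h' | h' <;> subst h <;> subst h' <;>
    simp [sgn] <;> norm_num

lemma TPRp_factor (μ : Measure Ω) [IsProbabilityMeasure μ] (C Y A : Ω → ℝ)
    (hCval : ∀ ω, C ω = 0 ∨ C ω = 1) (hYval : ∀ ω, Y ω = 0 ∨ Y ω = 1) (a₁ a₂ : ℝ) :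
    TPRp μ C Y A a₁ a₂ = TPR μ C Y A a₁ * TNR μ C Y A a₂ := by
  have hset1 : {p : Ω × Ω | Cij C p = 1} ∩ {p | Aij A p = (a₁, a₂) ∧ Yij Y p = 1}
      = ({ω | C ω = 1} ∩ {ω | Y ω = 1 ∧ A ω = a₁}) ×ˢ
        ({ω | C ω = 0} ∩ {ω | Y ω = 0 ∧ A ω = a₂}) := by
    ext p
    simp only [Set.mem_inter_iff, Set.mem_setOf_eq, Set.mem_prod, Cij, Yij, Aij,
      Prod.mk.injEq]
    rw [sgn_sub_eq_one_iff (hCval p.1) (hCval p.2),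
      sgn_sub_eq_one_iff (hYval p.1) (hYval p.2)]
    tauto
  have hset2 : {p : Ω × Ω | Aij A p = (a₁, a₂) ∧ Yij Y p = 1}
      = ({ω | Y ω = 1 ∧ A ω = a₁}) ×ˢ ({ω | Y ω = 0 ∧ A ω = a₂}) := by
    ext p
    simp only [Set.mem_setOf_eq, Set.mem_prod, Yij, Aij, Prod.mk.injEq]
    rw [sgn_sub_eq_one_iff (hYval p.1) (hYval p.2)]
    tauto
  unfold TPRp TPR TNR condP
  rw [hset1, hset2, Measure.prod_prod, Measure.prod_prod, ENNReal.toReal_mul,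
    ENNReal.toReal_mul, div_mul_div_comm]

/-- If the comparative true positive rate is constant across all four group pairs, then the
groupwise true positive and true negative rates are equal across groups. -/
theorem constant_TPRp_implies_equal_rates
    (μ : Measure Ω) [IsProbabilityMeasure μ]
    (C Y A : Ω → ℝ) (hC : Measurable C) (hY : Measurable Y) (hA : Measurable A)
    (hCval : ∀ ω, C ω = 0 ∨ C ω = 1)
    (hYval : ∀ ω, Y ω = 0 ∨ Y ω = 1)
    (hAval : ∀ ω, A ω = 0 ∨ A ω = 1)
    (hpos : ∀ y a : ℝ, (y = 0 ∨ y = 1) → (a = 0 ∨ a = 1) →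
      0 < μ {ω | Y ω = y ∧ A ω = a})
    (hTPR : ∀ a : ℝ, (a = 0 ∨ a = 1) → 0 < TPR μ C Y A a)
    (hTNR : ∀ a : ℝ, (a = 0 ∨ a = 1) → 0 < TNR μ C Y A a)
    (hconst : ∀ a₁ a₂ b₁ b₂ : ℝ, (a₁ = 0 ∨ a₁ = 1) → (a₂ = 0 ∨ a₂ = 1) →
      (b₁ = 0 ∨ b₁ = 1) → (b₂ = 0 ∨ b₂ = 1) →
      TPRp μ C Y A a₁ a₂ = TPRp μ C Y A b₁ b₂) :
    TPR μ C Y A 1 = TPR μ C Y A 0 ∧ TNR μ C Y A 1 = TNR μ C Y A 0 := by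
  have key := TPRp_factor μ C Y A hCval hYval
  have h1 := hconst 1 1 0 1 (Or.inr rfl) (Or.inr rfl) (Or.inl rfl) (Or.inr rfl)
  have h2 := hconst 1 1 1 0 (Or.inr rfl) (Or.inr rfl) (Or.inr rfl) (Or.inl rfl)
  rw [key, key] at h1 h2
  constructor
  · exact mul_right_cancel₀ (ne_of_gt (hTNR 1 (Or.inr rfl))) h1
  · exact mul_left_cancel₀ (ne_of_gt (hTPR 1 (Or.inr rfl))) h2
end
end

section
/- Suppose C, Y, A take values in {0,1}, μ(Y = y ∧ A = a) > 0 for all y, a ∈ {0,1}, and TPR(1) = TPR(0) and TNR(1) = TNR(0). Then for every (a₁,a₂) ∈ {0,1} × {0,1}, the comparative true positive rate satisfies TPRp(a₁,a₂) = TPR(1) · TNR(1); in particular TPRp is constant over all four group pairs. -/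
open MeasureTheory

noncomputable section

variable {Ω : Type*} [MeasurableSpace Ω]

lemma sgn_eq_one_iff_s6 {t : ℝ} : sgn t = 1 ↔ 0 < t := by
  unfold sgn
  split_ifs with h1 h2
  · simp [h1]
  · constructor
    · intro h; norm_num at h
    · intro h; linarith
  · constructor
    · intro h; norm_num at h
    · intro h; exact absurd h h1

/-- If the groupwise true positive and true negative rates agree across groups, then the
comparative true positive rate is the constant `TPR(1) · TNR(1)` on all four group pairs. -/
theorem equal_rates_implies_constant_TPRp
    (μ : Measure Ω) [IsProbabilityMeasure μ]
    (C Y A : Ω → ℝ) (hC : Measurable C) (hY : Measurable Y) (hA : Measurable A)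
    (hCval : ∀ ω, C ω = 0 ∨ C ω = 1)
    (hYval : ∀ ω, Y ω = 0 ∨ Y ω = 1)
    (hAval : ∀ ω, A ω = 0 ∨ A ω = 1)
    (hpos : ∀ y a : ℝ, (y = 0 ∨ y = 1) → (a = 0 ∨ a = 1) →
      0 < μ {ω | Y ω = y ∧ A ω = a})
    (hTPReq : TPR μ C Y A 1 = TPR μ C Y A 0)
    (hTNReq : TNR μ C Y A 1 = TNR μ C Y A 0) :
    ∀ a₁ a₂ : ℝ, (a₁ = 0 ∨ a₁ = 1) → (a₂ = 0 ∨ a₂ = 1) →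
      TPRp μ C Y A a₁ a₂ = TPR μ C Y A 1 * TNR μ C Y A 1 := by
  intro a₁ a₂ ha₁ ha₂
  have hset : {p : Ω × Ω | Aij A p = (a₁, a₂) ∧ Yij Y p = 1}
      = {ω | Y ω = 1 ∧ A ω = a₁} ×ˢ {ω | Y ω = 0 ∧ A ω = a₂} := by
    ext p
    simp only [Set.mem_setOf_eq, Aij, Yij, Prod.mk.injEq, sgn_eq_one_iff_s6, Set.mem_prod]
    rcases hYval p.1 with h1 | h1 <;> rcases hYval p.2 with h2 | h2 <;>
      simp [h1, h2] <;> norm_num <;> tauto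
  have hCset : {p : Ω × Ω | Cij C p = 1}
        ∩ ({ω | Y ω = 1 ∧ A ω = a₁} ×ˢ {ω | Y ω = 0 ∧ A ω = a₂})
      = ({ω | C ω = 1} ∩ {ω | Y ω = 1 ∧ A ω = a₁})
        ×ˢ ({ω | C ω = 0} ∩ {ω | Y ω = 0 ∧ A ω = a₂}) := by
    ext p
    simp only [Set.mem_inter_iff, Set.mem_setOf_eq, Cij, sgn_eq_one_iff_s6, Set.mem_prod]
    rcases hCval p.1 with h1 | h1 <;> rcases hCval p.2 with h2 | h2 <;>
      simp [h1, h2] <;> norm_num <;> tauto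
  have h1 : TPRp μ C Y A a₁ a₂ = TPR μ C Y A a₁ * TNR μ C Y A a₂ := by
    unfold TPRp TPR TNR condP
    rw [hset, hCset, Measure.prod_prod, Measure.prod_prod,
      ENNReal.toReal_mul, ENNReal.toReal_mul, div_mul_div_comm]
  rw [h1]
  rcases ha₁ with rfl | rfl <;> rcases ha₂ with rfl | rfl <;>
    simp [hTPReq, hTNReq]
end
end
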